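/- Fix a real number a with 0 < a < 1/√2, set t₋ := (a^2/(1−a^2))^{1/6}, and let ξ₁ := (−1 + i√3)/2 and ξ₂ := (−1 − i√3)/2. For t ∈ (0, t₋) put h_j(t) := −i·(ξ_j·t + 1/(ξ_j·t))·C(t) for j = 1, 2. Then for every t ∈ (0, t₋) the map t ↦ z(t) is differentiable at t and its derivative z′(t) satisfies (h₁(t) − h₂(t))·z′(t) = (3√3·t/(t^4 + t^2 + 1))·( (1 − 2a^2)/(ã₊(t)·ã₋(t)) − i ); in particular the real part of (h₁(t) − h₂(t))·z′(t) is strictly positive. -/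

import Mathlib

open Complex

/-- `ã₊(t) := √((1−a²) − a²t⁶)`. -/
noncomputable def aPlus (a t : ℝ) : ℝ := Real.sqrt ((1 - a ^ 2) - a ^ 2 * t ^ 6)

/-- `ã₋(t) := √(a²t⁻⁶ − (1−a²))`. -/
noncomputable def aMinus (a t : ℝ) : ℝ := Real.sqrt (a ^ 2 / t ^ 6 - (1 - a ^ 2))

/-- `C(t) := (ã₊(t) + i t⁶ ã₋(t)) / ((1−a²)(1+t⁶))`. -/
noncomputable def Cparam (a t : ℝ) : ℂ :=
  ((aPlus a t : ℂ) + Complex.I * (t : ℂ) ^ 6 * (aMinus a t : ℂ))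
    / (((1 - a ^ 2 : ℝ) : ℂ) * (1 + (t : ℂ) ^ 6))

/-- `z(t) := (t³/(1−t⁶))(ã₋(t) + i ã₊(t))`. -/
noncomputable def zparam (a t : ℝ) : ℂ :=
  ((t : ℂ) ^ 3 / (1 - (t : ℂ) ^ 6)) * ((aMinus a t : ℂ) + Complex.I * (aPlus a t : ℂ))

/-!
Since `ξ₁ξ₂ = 1` and `ξ₁ − ξ₂ = i√3`, the Joukowsky terms give `h₁ − h₂ = √3 (t − 1/t) C(t)`.
Differentiating `z = r (ã₋ + i ã₊)` with `r = t³/(1−t⁶)` and eliminating `ã₊²` and `t⁶ã₋²`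
through their radicands gives `z′ = 3t²/(1−t⁶)² (X/ã₋ + i Y/ã₊)` with `X, Y` polynomial in `a², t⁶`.
In the product `C(t) z′` the imaginary part collapses to a multiple of `(1−a²)(1−t¹²)` and the real
part to `−(1−2a²)(1−a²)(1−t¹²)/(ã₊ã₋)`; the factor `1 − t⁶ = (1 − t²)(1 + t² + t⁴)` then cancels
against `t − 1/t`.
-/

lemma joukowsky_sub_of_mul_eq_one {K : Type*} [Field K] {ξ₁ ξ₂ : K} (h : ξ₁ * ξ₂ = 1) (t : K) :
    ξ₁ * t + 1 / (ξ₁ * t) - (ξ₂ * t + 1 / (ξ₂ * t)) = (ξ₁ - ξ₂) * (t - 1 / t) := by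
  have h₁ : ξ₁⁻¹ = ξ₂ := inv_eq_of_mul_eq_one_right h
  have h₂ : ξ₂⁻¹ = ξ₁ := inv_eq_of_mul_eq_one_right (by rwa [mul_comm])
  simp only [one_div, mul_inv, h₁, h₂]
  ring

lemma cubeRoots_mul :
    (-1 + I * (Real.sqrt 3 : ℂ)) / 2 * ((-1 - I * (Real.sqrt 3 : ℂ)) / 2) = 1 := by
  have h3 : ((Real.sqrt 3 : ℝ) : ℂ) ^ 2 = 3 := by
    rw [← ofReal_pow, Real.sq_sqrt (by norm_num)]
    norm_num
  linear_combination (-1 / 4 : ℂ) * (Real.sqrt 3 : ℂ) ^ 2 * I_sq + (1 / 4 : ℂ) * h3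

lemma cubeRoots_sub :
    (-1 + I * (Real.sqrt 3 : ℂ)) / 2 - (-1 - I * (Real.sqrt 3 : ℂ)) / 2 = I * (Real.sqrt 3 : ℂ) := by
  ring

section Arc

variable {a t : ℝ}

lemma one_sub_two_mul_sq_pos (ha0 : 0 < a) (ha1 : a < 1 / Real.sqrt 2) : 0 < 1 - 2 * a ^ 2 := by
  have hs : 0 < Real.sqrt 2 := by positivity
  have h : a * Real.sqrt 2 < 1 := by rwa [lt_div_iff₀ hs] at ha1
  nlinarith [Real.sq_sqrt (zero_le_two : (0 : ℝ) ≤ 2), mul_pos ha0 hs]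

lemma radicands_pos (ha : 0 < 1 - 2 * a ^ 2) (ht0 : 0 < t)
    (ht : t < (a ^ 2 / (1 - a ^ 2)) ^ ((1 : ℝ) / 6)) :
    0 < 1 - a ^ 2 - a ^ 2 * t ^ 6 ∧ 0 < a ^ 2 / t ^ 6 - (1 - a ^ 2) := by
  have hA : 0 < 1 - a ^ 2 := by nlinarith
  rw [one_div, Real.lt_rpow_inv_iff_of_pos ht0.le (by positivity) (by norm_num),
    lt_div_iff₀ hA] at ht
  norm_cast at ht
  refine ⟨by nlinarith, ?_⟩
  rw [sub_pos, lt_div_iff₀ (by positivity)]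
  linarith

lemma pow_six_lt_one_of_radicands_pos (ht : 0 < t) (hP : 0 < 1 - a ^ 2 - a ^ 2 * t ^ 6)
    (hM : 0 < a ^ 2 / t ^ 6 - (1 - a ^ 2)) : t ^ 6 < 1 := by
  rw [sub_pos, lt_div_iff₀ (by positivity)] at hM
  linarith

lemma aPlus_sq (h : 0 ≤ 1 - a ^ 2 - a ^ 2 * t ^ 6) : aPlus a t ^ 2 = 1 - a ^ 2 - a ^ 2 * t ^ 6 :=
  Real.sq_sqrt h

lemma aMinus_sq_mul_pow_six (ht : t ≠ 0) (h : 0 ≤ a ^ 2 / t ^ 6 - (1 - a ^ 2)) :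
    aMinus a t ^ 2 * t ^ 6 = a ^ 2 - (1 - a ^ 2) * t ^ 6 := by
  rw [aMinus, Real.sq_sqrt h, sub_mul, div_mul_cancel₀ _ (pow_ne_zero 6 ht)]

lemma hasDerivAt_aPlus (h : 0 < 1 - a ^ 2 - a ^ 2 * t ^ 6) :
    HasDerivAt (aPlus a) (-(3 * a ^ 2 * t ^ 5) / aPlus a t) t := by
  have hP : aPlus a t ≠ 0 := (Real.sqrt_pos.mpr h).ne'
  have hf : HasDerivAt (fun s : ℝ => 1 - a ^ 2 - a ^ 2 * s ^ 6) (-(a ^ 2 * (6 * t ^ 5))) t := by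
    simpa using ((hasDerivAt_pow 6 t).const_mul (a ^ 2)).const_sub (1 - a ^ 2)
  refine (hf.sqrt h.ne').congr_deriv ?_
  rw [← aPlus]
  field_simp
  ring

lemma hasDerivAt_aMinus (ht : t ≠ 0) (h : 0 < a ^ 2 / t ^ 6 - (1 - a ^ 2)) :
    HasDerivAt (aMinus a) (-(3 * a ^ 2) / (t ^ 7 * aMinus a t)) t := by
  have hM : aMinus a t ≠ 0 := (Real.sqrt_pos.mpr h).ne'
  have hf : HasDerivAt (fun s : ℝ => a ^ 2 / s ^ 6 - (1 - a ^ 2))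
      (a ^ 2 * -(6 * t ^ 5 / (t ^ 6) ^ 2)) t := by
    simpa [div_eq_mul_inv] using
      (((hasDerivAt_pow 6 t).inv (pow_ne_zero 6 ht)).const_mul (a ^ 2)).sub_const (1 - a ^ 2)
  refine (hf.sqrt h.ne').congr_deriv ?_
  rw [← aMinus]
  field_simp
  ring

lemma hasDerivAt_pow_three_div_one_sub_pow_six (ht : t ^ 6 ≠ 1) :
    HasDerivAt (fun s : ℝ => s ^ 3 / (1 - s ^ 6)) (3 * t ^ 2 * (1 + t ^ 6) / (1 - t ^ 6) ^ 2) t := by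
  refine ((hasDerivAt_pow 3 t).div ((hasDerivAt_pow 6 t).const_sub 1)
    (sub_ne_zero.mpr (Ne.symm ht))).congr_deriv ?_
  push_cast
  ring

lemma hasDerivAt_mul_aMinus (ht : t ≠ 0) (ht6 : t ^ 6 ≠ 1) (h : 0 < a ^ 2 / t ^ 6 - (1 - a ^ 2)) :
    HasDerivAt (fun s : ℝ => s ^ 3 / (1 - s ^ 6) * aMinus a s)
      (3 * t ^ 2 / (1 - t ^ 6) ^ 2 * ((3 * a ^ 2 - 1 - (1 - a ^ 2) * t ^ 6) / aMinus a t)) t := by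
  have hM : aMinus a t ≠ 0 := (Real.sqrt_pos.mpr h).ne'
  have h1 : 1 - t ^ 6 ≠ 0 := sub_ne_zero.mpr (Ne.symm ht6)
  refine ((hasDerivAt_pow_three_div_one_sub_pow_six ht6).mul
    (hasDerivAt_aMinus ht h)).congr_deriv ?_
  field_simp
  linear_combination (1 + t ^ 6) * aMinus_sq_mul_pow_six ht h.le

lemma hasDerivAt_mul_aPlus (ht6 : t ^ 6 ≠ 1) (h : 0 < 1 - a ^ 2 - a ^ 2 * t ^ 6) :
    HasDerivAt (fun s : ℝ => s ^ 3 / (1 - s ^ 6) * aPlus a s)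
      (3 * t ^ 2 / (1 - t ^ 6) ^ 2 * ((1 - a ^ 2 + (1 - 3 * a ^ 2) * t ^ 6) / aPlus a t)) t := by
  have hP : aPlus a t ≠ 0 := (Real.sqrt_pos.mpr h).ne'
  have h1 : 1 - t ^ 6 ≠ 0 := sub_ne_zero.mpr (Ne.symm ht6)
  refine ((hasDerivAt_pow_three_div_one_sub_pow_six ht6).mul
    (hasDerivAt_aPlus h)).congr_deriv ?_
  field_simp
  linear_combination t ^ 2 * (1 + t ^ 6) * aPlus_sq h.le

noncomputable def zparamDeriv (a t : ℝ) : ℂ :=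
  ((3 * t ^ 2 / (1 - t ^ 6) ^ 2 : ℝ) : ℂ) *
    (((3 * a ^ 2 - 1 - (1 - a ^ 2) * t ^ 6) / aMinus a t : ℝ)
      + I * ((1 - a ^ 2 + (1 - 3 * a ^ 2) * t ^ 6) / aPlus a t : ℝ))

lemma zparam_eq_ofReal_add_I_mul (a : ℝ) : zparam a = fun s : ℝ =>
    ((s ^ 3 / (1 - s ^ 6) * aMinus a s : ℝ) : ℂ) + I * ((s ^ 3 / (1 - s ^ 6) * aPlus a s : ℝ) : ℂ) := by
  funext s
  simp only [zparam]
  push_cast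
  ring

lemma hasDerivAt_zparam (ht : 0 < t) (hP : 0 < 1 - a ^ 2 - a ^ 2 * t ^ 6)
    (hM : 0 < a ^ 2 / t ^ 6 - (1 - a ^ 2)) : HasDerivAt (zparam a) (zparamDeriv a t) t := by
  have ht6 := (pow_six_lt_one_of_radicands_pos ht hP hM).ne
  rw [zparam_eq_ofReal_add_I_mul]
  refine ((hasDerivAt_mul_aMinus ht.ne' ht6 hM).ofReal_comp.add
    ((hasDerivAt_mul_aPlus ht6 hP).ofReal_comp.const_mul I)).congr_deriv ?_
  rw [zparamDeriv]
  push_cast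
  ring

lemma Cparam_mul_zparamDeriv (ht : 0 < t) (hP : 0 < 1 - a ^ 2 - a ^ 2 * t ^ 6)
    (hM : 0 < a ^ 2 / t ^ 6 - (1 - a ^ 2)) :
    Cparam a t * zparamDeriv a t =
      ((3 * t ^ 2 / (1 - t ^ 6) : ℝ) : ℂ) * (I - ((1 - 2 * a ^ 2) / (aPlus a t * aMinus a t) : ℝ)) := by
  have ht6 := pow_six_lt_one_of_radicands_pos ht hP hM
  have hA : 0 < 1 - a ^ 2 := by nlinarith [mul_nonneg (sq_nonneg a) (pow_nonneg ht.le 6)]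
  have hP2 : (aPlus a t : ℂ) ^ 2 = 1 - a ^ 2 - a ^ 2 * t ^ 6 := by exact_mod_cast aPlus_sq hP.le
  have hM2 : (aMinus a t : ℂ) ^ 2 * t ^ 6 = a ^ 2 - (1 - a ^ 2) * t ^ 6 := by
    exact_mod_cast aMinus_sq_mul_pow_six ht.ne' hM.le
  have hPne : (aPlus a t : ℂ) ≠ 0 := by exact_mod_cast (Real.sqrt_pos.mpr hP).ne'
  have hMne : (aMinus a t : ℂ) ≠ 0 := by exact_mod_cast (Real.sqrt_pos.mpr hM).ne'
  have hAne : 1 - (a : ℂ) ^ 2 ≠ 0 := by exact_mod_cast hA.ne'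
  have h1 : 1 - (t : ℂ) ^ 6 ≠ 0 := by exact_mod_cast (sub_pos.mpr ht6).ne'
  have h2 : 1 + (t : ℂ) ^ 6 ≠ 0 := by exact_mod_cast (by positivity : (0 : ℝ) < 1 + t ^ 6).ne'
  rw [Cparam, zparamDeriv]
  push_cast
  field_simp
  linear_combination (t : ℂ) ^ 2 * (3 * a ^ 2 - 1 - (1 - a ^ 2) * t ^ 6) * hP2
    + (t : ℂ) ^ 2 * I ^ 2 * (1 - a ^ 2 + (1 - 3 * a ^ 2) * t ^ 6) * hM2
    + (t : ℂ) ^ 2 * (1 - a ^ 2 + (1 - 3 * a ^ 2) * t ^ 6) * (a ^ 2 - (1 - a ^ 2) * t ^ 6) * I_sq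

end Arc

/-- The derivative identity at the end of Section 6.2 of the paper: with
`ξ₁ = (−1+i√3)/2`, `ξ₂ = (−1−i√3)/2` and `h_j(t) = −i(ξ_j t + 1/(ξ_j t))C(t)`, the map
`t ↦ z(t)` is differentiable on `(0, t₋)` and
`(h₁−h₂)z′ = (3√3 t/(t⁴+t²+1))((1−2a²)/(ã₊ã₋) − i)`; in particular
`Re((h₁−h₂)z′) > 0`. -/
theorem derivative_identity (a : ℝ) (ha0 : 0 < a) (ha1 : a < 1 / Real.sqrt 2)
    (t : ℝ) (ht0 : 0 < t) (ht1 : t < (a ^ 2 / (1 - a ^ 2)) ^ ((1 : ℝ) / 6)) :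
    let ξ₁ : ℂ := (-1 + Complex.I * (Real.sqrt 3 : ℂ)) / 2
    let ξ₂ : ℂ := (-1 - Complex.I * (Real.sqrt 3 : ℂ)) / 2
    let h₁ : ℂ := -Complex.I * (ξ₁ * (t : ℂ) + 1 / (ξ₁ * (t : ℂ))) * Cparam a t
    let h₂ : ℂ := -Complex.I * (ξ₂ * (t : ℂ) + 1 / (ξ₂ * (t : ℂ))) * Cparam a t
    DifferentiableAt ℝ (zparam a) t ∧
    (h₁ - h₂) * deriv (zparam a) t
      = ((3 * Real.sqrt 3 * t / (t ^ 4 + t ^ 2 + 1) : ℝ) : ℂ)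
          * ((((1 - 2 * a ^ 2) / (aPlus a t * aMinus a t) : ℝ) : ℂ) - Complex.I) ∧
    0 < ((h₁ - h₂) * deriv (zparam a) t).re := by
  intro ξ₁ ξ₂ h₁ h₂
  have ha := one_sub_two_mul_sq_pos ha0 ha1
  obtain ⟨hP, hM⟩ := radicands_pos ha ht0 ht1
  have hz := hasDerivAt_zparam ht0 hP hM
  have hdiff : h₁ - h₂ = ((Real.sqrt 3 * (t - 1 / t) : ℝ) : ℂ) * Cparam a t := by
    rw [← sub_mul, ← mul_sub, joukowsky_sub_of_mul_eq_one cubeRoots_mul, cubeRoots_sub]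
    push_cast
    linear_combination (-(Real.sqrt 3 : ℂ) * (t - 1 / t) * Cparam a t) * I_sq
  have hfactor : Real.sqrt 3 * (t - 1 / t) * (3 * t ^ 2 / (1 - t ^ 6))
      = -(3 * Real.sqrt 3 * t / (t ^ 4 + t ^ 2 + 1)) := by
    have : 1 - t ^ 6 ≠ 0 := (sub_pos.mpr (pow_six_lt_one_of_radicands_pos ht0 hP hM)).ne'
    field_simp
    ring
  have key : (h₁ - h₂) * deriv (zparam a) t
      = ((3 * Real.sqrt 3 * t / (t ^ 4 + t ^ 2 + 1) : ℝ) : ℂ)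
          * ((((1 - 2 * a ^ 2) / (aPlus a t * aMinus a t) : ℝ) : ℂ) - Complex.I) := by
    rw [hz.deriv, hdiff, mul_assoc, Cparam_mul_zparamDeriv ht0 hP hM, ← mul_assoc, ← ofReal_mul,
      hfactor, ofReal_neg]
    ring
  refine ⟨hz.differentiableAt, key, ?_⟩
  rw [key, re_ofReal_mul, sub_re, ofReal_re, I_re, sub_zero]
  exact mul_pos (by positivity)
    (div_pos ha (mul_pos (Real.sqrt_pos.mpr hP) (Real.sqrt_pos.mpr hM)))
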